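/- For every real ε > 0 and integer k ≥ √2/ε, every point x = (x_1,…,x_n) in the path L = ⋃_{i=1}^{n−1} conv{e_i, e_{i+1}} whose Euclidean distance from e_n is at least ε satisfies x_n ≤ (k−1)/k. -/

import Mathlib

/-! On the edge `[e_{n-1}, e_n]` the point at distance `d` from `e_n` has last coordinate
`1 - d/√2`, since the edge has length `√2`; on every other edge the last coordinate vanishes.
With `d ≥ ε` and `ε/√2 ≥ 1/k` this gives `x_n ≤ 1 - 1/k`. -/

namespace EuclideanSpace

variable {ι : Type*} [DecidableEq ι]

theorem apply_eq_zero_of_mem_segment_single {i j l : ι} {x : EuclideanSpace ℝ ι}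
    (hx : x ∈ segment ℝ (single i 1) (single j 1)) (hli : l ≠ i) (hlj : l ≠ j) :
    x l = 0 := by
  obtain ⟨a, b, -, -, -, rfl⟩ := hx
  simp [hli, hlj]

variable [Fintype ι]

theorem dist_single_one_of_ne {i j : ι} (h : i ≠ j) :
    dist (single i (1 : ℝ)) (single j 1) = √2 := by
  have horth : inner ℝ (single i (1 : ℝ)) (single j 1) = 0 := by
    simp [inner_single_left, h.symm]
  rw [dist_eq_norm, ← Real.sqrt_sq (norm_nonneg _), norm_sub_sq_real, horth]
  norm_num [PiLp.norm_single]

theorem apply_eq_one_sub_dist_of_mem_segment_single {i j : ι} (hij : i ≠ j)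
    {x : EuclideanSpace ℝ ι} (hx : x ∈ segment ℝ (single i 1) (single j 1)) :
    x j = 1 - dist x (single j 1) / √2 := by
  rw [segment_eq_image_lineMap] at hx
  obtain ⟨t, ⟨-, ht1⟩, rfl⟩ := hx
  rw [dist_lineMap_right, dist_single_one_of_ne hij, Real.norm_eq_abs,
    abs_of_nonneg (sub_nonneg.mpr ht1), mul_div_cancel_right₀ _ (by positivity),
    AffineMap.lineMap_apply_module]
  simp [hij.symm]

end EuclideanSpace

/-- For `ε > 0` and an integer `k ≥ √2/ε`, every point `x` of the path
`L = ⋃_{i=1}^{n−1} conv{e_i, e_{i+1}}` at Euclidean distance at least `ε` from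
`e_n` satisfies `x_n ≤ (k−1)/k`. -/
theorem stmt16 (n : ℕ) (hn : 2 ≤ n) (ε : ℝ) (hε : 0 < ε)
    (k : ℕ) (hk : Real.sqrt 2 / ε ≤ (k : ℝ))
    (x : EuclideanSpace ℝ (Fin n))
    (hx : x ∈ ⋃ i : Fin n, ⋃ hi : (i : ℕ) + 1 < n,
      segment ℝ (EuclideanSpace.single i 1)
        (EuclideanSpace.single (⟨(i : ℕ) + 1, hi⟩ : Fin n) 1))
    (hd : ε ≤ dist x (EuclideanSpace.single (⟨n - 1, by omega⟩ : Fin n) 1)) :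
    x ⟨n - 1, by omega⟩ ≤ ((k : ℝ) - 1) / k := by
  have hk0 : (0 : ℝ) < k := (div_pos (by positivity) hε).trans_le hk
  have hk1 : (1 : ℝ) ≤ k := Nat.one_le_cast.mpr (Nat.cast_pos.mp hk0)
  rw [sub_div, div_self hk0.ne']
  simp only [Set.mem_iUnion] at hx
  obtain ⟨i, hi, hseg⟩ := hx
  rcases (by omega : (i : ℕ) + 1 < n - 1 ∨ (i : ℕ) + 1 = n - 1) with hlt | heq
  · rw [EuclideanSpace.apply_eq_zero_of_mem_segment_single hseg
      (by simp [Fin.ext_iff]; omega) (by simp [Fin.ext_iff]; omega)]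
    linarith [div_le_one_of_le₀ hk1 hk0.le]
  · rw [show (⟨(i : ℕ) + 1, hi⟩ : Fin n) = ⟨n - 1, by omega⟩ from Fin.ext heq] at hseg
    rw [EuclideanSpace.apply_eq_one_sub_dist_of_mem_segment_single
      (by simp [Fin.ext_iff]; omega) hseg]
    have hkε : 1 / (k : ℝ) ≤ ε / √2 := by
      rw [div_le_div_iff₀ hk0 (by positivity), one_mul, mul_comm]
      exact (div_le_iff₀ hε).mp hk
    linarith [div_le_div_of_nonneg_right hd (Real.sqrt_nonneg 2)]
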